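/- For every positive integer k, the bound L(k) ≤ p·(L(k−1)+1) − 1 holds, where L(j) denotes the supremum of lengths of sequences of 0-1 vectors of length j (each with exactly one '1') satisfying the process condition with parameter p. In particular L(1) ≤ p − 1 and L(k) ≤ p − 1 + p·(p^{k-1} − 1) = p^k − 1. -/

import Mathlib

/-- The process condition with parameter `p` for a sequence of 0–1 vectors of length `m`
(each with exactly one `1`, encoded by the position of its `1`): among any `p` terms whose
`1` is at position `v`, some term strictly between the first and the `p`-th of them has its
`1` at a strictly smaller position. -/
def ProcCond (p : ℕ) {m : ℕ} (hp : 2 ≤ p) (S : List (Fin m)) : Prop :=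
  ∀ v : Fin m, ∀ idx : Fin p → Fin S.length,
    StrictMono idx → (∀ a, S.get (idx a) = v) →
    ∃ j : Fin S.length, idx ⟨0, by omega⟩ < j ∧ j < idx ⟨p - 1, by omega⟩ ∧ S.get j < v

/-- A sequence satisfying the process condition has at most `p - 1` occurrences of `0`. -/
lemma count_zero_le {p m : ℕ} (hp : 2 ≤ p) (S : List (Fin (m + 1)))
    (h : ProcCond p hp S) : S.count 0 ≤ p - 1 := by
  by_contra hc
  push_neg at hc
  have hcard : (Finset.univ.filter (fun i : Fin S.length => S.get i = 0)).card = S.count 0 := by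
    have := Fin.card_filter_univ_eq_vector_get_eq_count (0 : Fin (m+1))
      (⟨S, rfl⟩ : List.Vector (Fin (m+1)) S.length)
    exact this
  have hp' : p ≤ (Finset.univ.filter (fun i : Fin S.length => S.get i = 0)).card := by omega
  obtain ⟨s, hs, hscard⟩ := Finset.exists_subset_card_eq hp'
  obtain ⟨j, _, _, hj⟩ := h 0 (s.orderEmbOfFin hscard) (s.orderEmbOfFin hscard).strictMono
    (fun a => by
      have := hs (s.orderEmbOfFin_mem hscard a)
      simpa using this)
  exact absurd hj (by simp)

/-- The process condition is inherited by suffixes. -/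
lemma procCond_suffix {p m : ℕ} (hp : 2 ≤ p) (A B : List (Fin m))
    (h : ProcCond p hp (A ++ B)) : ProcCond p hp B := by
  intro v idx hmono hval
  have hAB : (A ++ B).length = A.length + B.length := List.length_append
  have hlt : ∀ a : Fin p, A.length + (idx a).val < (A ++ B).length := by
    intro a; have := (idx a).isLt; omega
  let idx' : Fin p → Fin (A ++ B).length := fun a => ⟨A.length + (idx a).val, hlt a⟩
  have hmono' : StrictMono idx' := fun a b hab => by
    have := hmono hab
    rw [Fin.lt_def] at this ⊢
    simpa [idx'] using this
  have hget : ∀ a, (A ++ B).get (idx' a) = B.get (idx a) := by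
    intro a
    simp only [List.get_eq_getElem]
    rw [List.getElem_append_right (by simp [idx'])]
    simp [idx']
  obtain ⟨j, hj1, hj2, hj3⟩ := h v idx' hmono' (fun a => (hget a).trans (hval a))
  rw [Fin.lt_def] at hj1 hj2
  simp only [idx'] at hj1 hj2
  have hjlt : (j : ℕ) < A.length + B.length := by have := j.isLt; omega
  have hjge : A.length ≤ (j : ℕ) := by omega
  refine ⟨⟨(j : ℕ) - A.length, by omega⟩, ?_, ?_, ?_⟩
  · rw [Fin.lt_def]; simp; omega
  · rw [Fin.lt_def]; simp; omega
  · have heq : B.get ⟨(j:ℕ) - A.length, by omega⟩ = (A ++ B).get j := by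
      simp only [List.get_eq_getElem]
      rw [List.getElem_append_right (by omega)]
    rw [heq]; exact hj3

/-- A zero-free prefix, with every entry decreased by one, satisfies the process
condition over `Fin m`; hence its length is bounded by any bound valid over `Fin m`. -/
lemma prefix_bound {p m M : ℕ} (hp : 2 ≤ p) (A B : List (Fin (m + 1)))
    (hA0 : ∀ x ∈ A, x ≠ 0) (h : ProcCond p hp (A ++ B))
    (hM : ∀ T : List (Fin m), ProcCond p hp T → T.length ≤ M) : A.length ≤ M := by
  have hval1 : ∀ x ∈ A, 1 ≤ (x : ℕ) := by
    intro x hx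
    have := hA0 x hx
    by_contra hc
    exact this (Fin.ext (by simp only [Fin.val_zero]; omega))
  let A' : List (Fin m) := A.attach.map
    (fun x => ⟨(x.1 : ℕ) - 1, by have h1 := hval1 x.1 x.2; have h2 := x.1.isLt; omega⟩)
  have hlen : A'.length = A.length := by simp [A']
  have hgetA' : ∀ (i : ℕ) (hi : i < A'.length),
      (A'.get ⟨i, hi⟩ : ℕ) = (A.get ⟨i, by omega⟩ : ℕ) - 1 := by
    intro i hi
    simp [A', List.getElem_map, List.getElem_attach]
  have hPC : ProcCond p hp A' := by
    intro v' idx hmono hval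
    have hlt : ∀ a : Fin p, (idx a : ℕ) < (A ++ B).length := by
      intro a; have := (idx a).isLt; simp; omega
    let idx' : Fin p → Fin (A ++ B).length := fun a => ⟨(idx a : ℕ), hlt a⟩
    have hmono' : StrictMono idx' := fun a b hab => by
      have := hmono hab; rw [Fin.lt_def] at this ⊢; simpa [idx'] using this
    have hvlt : (v' : ℕ) + 1 < m + 1 := by have := v'.isLt; omega
    have hgetA : ∀ a : Fin p, ((A.get ⟨(idx a : ℕ), by omega⟩ : Fin (m+1)) : ℕ) = (v' : ℕ) + 1 := by
      intro a
      have h1 := hgetA' (idx a) (idx a).isLt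
      have h2 : A'.get ⟨(idx a : ℕ), (idx a).isLt⟩ = v' := by
        rw [show (⟨(idx a : ℕ), (idx a).isLt⟩ : Fin A'.length) = idx a from Fin.ext rfl]
        exact hval a
      have h3 := hval1 (A.get ⟨(idx a : ℕ), by omega⟩) (A.get_mem _)
      rw [h2] at h1
      omega
    obtain ⟨j, hj1, hj2, hj3⟩ := h ⟨(v' : ℕ) + 1, hvlt⟩ idx' hmono'
      (fun a => by
        simp only [idx', List.get_eq_getElem]
        rw [List.getElem_append_left (by omega)]
        exact Fin.ext (hgetA a))
    rw [Fin.lt_def] at hj1 hj2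
    simp only [idx'] at hj1 hj2
    have hjA : (j : ℕ) < A.length := by
      have := (idx ⟨p - 1, by omega⟩).isLt; omega
    have hgj : (A ++ B).get j = A.get ⟨(j : ℕ), hjA⟩ := by
      simp only [List.get_eq_getElem]
      rw [List.getElem_append_left (by omega)]
    rw [hgj, Fin.lt_def] at hj3
    simp only [Fin.val_mk] at hj3
    have h4 := hval1 (A.get ⟨(j : ℕ), hjA⟩) (A.get_mem _)
    refine ⟨⟨(j : ℕ), by omega⟩, ?_, ?_, ?_⟩
    · rw [Fin.lt_def]; simpa using hj1
    · rw [Fin.lt_def]; simpa using hj2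
    · rw [Fin.lt_def]
      have h5 := hgetA' (j : ℕ) (by omega)
      omega
  have := hM A' hPC
  omega

/-- Block decomposition: splitting at occurrences of `0`, a sequence over `Fin (m+1)`
satisfying the process condition has length at most `(count of zeros)·(M+1) + M`. -/
lemma block_bound {p m M : ℕ} (hp : 2 ≤ p)
    (hM : ∀ T : List (Fin m), ProcCond p hp T → T.length ≤ M) :
    ∀ (n : ℕ) (S : List (Fin (m + 1))), S.length ≤ n → ProcCond p hp S →
      S.length ≤ (S.count 0) * (M + 1) + M := by
  intro n
  induction n with
  | zero => intro S hlen _; omega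
  | succ n ih =>
    intro S hlen hS
    by_cases h0 : (0 : Fin (m + 1)) ∈ S
    · set A := S.takeWhile (fun x => x != 0) with hA
      set D := S.dropWhile (fun x => x != 0) with hD
      have hAD : A ++ D = S := List.takeWhile_append_dropWhile
      have hA0 : ∀ x ∈ A, x ≠ 0 := by
        intro x hx
        have := List.mem_takeWhile_imp hx
        simpa using this
      have hDne : D ≠ [] := by
        intro hDe
        have : A = S := by rw [← hAD, hDe, List.append_nil]
        exact hA0 0 (this ▸ h0) rfl
      have hhead : D.head hDne = 0 := by
        have := List.head_dropWhile_not (p := fun x => x != 0) (l := S) (by rw [← hD]; exact hDne)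
        simpa using this
      set B := D.tail with hB
      have hDB : D = 0 :: B := by
        rw [← hhead, hB]; exact (List.cons_head_tail hDne).symm
      have hS' : S = A ++ 0 :: B := by rw [← hAD, hDB]
      have hlenS : S.length = A.length + 1 + B.length := by
        rw [hS']; simp; omega
      have hAle : A.length ≤ M := by
        apply prefix_bound hp A (0 :: B) hA0 _ hM
        rw [← hS']; exact hS
      have hPCB : ProcCond p hp B := by
        apply procCond_suffix hp (A ++ [0]) B
        have : (A ++ [0]) ++ B = S := by rw [hS']; simp
        rw [this]; exact hS
      have hBle := ih B (by omega) hPCB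
      have hcount : S.count 0 = B.count 0 + 1 := by
        rw [hS', List.count_append, List.count_cons]
        have : A.count 0 = 0 := by
          rw [List.count_eq_zero]
          intro hc; exact hA0 0 hc rfl
        simp [this]
      rw [hcount]
      have hr : (B.count 0 + 1) * (M + 1) = B.count 0 * (M + 1) + (M + 1) := by ring
      omega
    · have hcount : S.count 0 = 0 := List.count_eq_zero.mpr h0
      have : S.length ≤ M := by
        apply prefix_bound hp S [] (fun x hx => by rintro rfl; exact h0 hx) _ hM
        rw [List.append_nil]; exact hS
      omega

/-- The bound `L(n) ≤ p^n - 1` for all `n`. -/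
lemma pow_bound {p : ℕ} (hp : 2 ≤ p) :
    ∀ (n : ℕ) (T : List (Fin n)), ProcCond p hp T → T.length ≤ p ^ n - 1 := by
  intro n
  induction n with
  | zero =>
    intro T _
    cases T with
    | nil => simp
    | cons a l => exact a.elim0
  | succ n ih =>
    intro T hT
    have hlen := block_bound hp ih T.length T le_rfl hT
    have hc := count_zero_le hp T hT
    have h1 : 1 ≤ p ^ n := Nat.one_le_pow _ _ (by omega)
    have h2 : T.count 0 * (p ^ n - 1 + 1) = T.count 0 * p ^ n := by
      congr 1; omega
    have h3 : T.count 0 * p ^ n ≤ (p - 1) * p ^ n :=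
      Nat.mul_le_mul_right _ hc
    have h4 : p ^ (n + 1) = p ^ n * p := pow_succ p n
    have h5 : p ^ n * p = (p - 1) * p ^ n + p ^ n := by
      have hq : p - 1 + 1 = p := by omega
      calc p ^ n * p = (p - 1 + 1) * p ^ n := by rw [hq]; ring
        _ = (p - 1) * p ^ n + p ^ n := by ring
    omega

/-- The recursive bound on the process lemma: `L(1) ≤ p - 1`,
`L(k) ≤ p·(L(k-1)+1) - 1`, and hence `L(k) ≤ p^k - 1`. -/
theorem stmt_5 (p k : ℕ) (hp : 2 ≤ p) (hk : 1 ≤ k) :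
    (∀ S : List (Fin 1), ProcCond p hp S → S.length ≤ p - 1) ∧
    (∀ M : ℕ, (∀ S : List (Fin (k - 1)), ProcCond p hp S → S.length ≤ M) →
      ∀ S : List (Fin k), ProcCond p hp S → S.length ≤ p * (M + 1) - 1) ∧
    (∀ S : List (Fin k), ProcCond p hp S → S.length ≤ p ^ k - 1) := by
  obtain ⟨m, rfl⟩ : ∃ m, k = m + 1 := ⟨k - 1, by omega⟩
  refine ⟨?_, ?_, ?_⟩
  · intro S hS
    have hc := count_zero_le (m := 0) hp S hS
    have : S.count 0 = S.length := by
      rw [List.count_eq_length]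
      intro b _
      exact Subsingleton.elim _ _
    omega
  · intro M hM S hS
    have hlen := block_bound hp hM S.length S le_rfl hS
    have hc := count_zero_le hp S hS
    have h3 : S.count 0 * (M + 1) ≤ (p - 1) * (M + 1) := Nat.mul_le_mul_right _ hc
    have h5 : p * (M + 1) = (p - 1) * (M + 1) + (M + 1) := by
      have hq : p - 1 + 1 = p := by omega
      calc p * (M + 1) = (p - 1 + 1) * (M + 1) := by rw [hq]
        _ = (p - 1) * (M + 1) + (M + 1) := by ring
    omega
  · exact pow_bound hp (m + 1)
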